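/- arXiv:2405.03422 — 3 statements merged into one kernel-verified Lean document; each statement's English description precedes it below -/
import Mathlib

section
/- Let 0 ≤ l < k ≤ n. For every λ ∈ Γ_k, Σ_{i=1}^{n} ∂[(σ_k(λ)/σ_l(λ))^{1/(k−l)}]/∂λ_i ≥ (C_n^k/C_n^l)^{1/(k−l)}, where C_n^k = binom(n,k). -/
open Finset MeasureTheory Metric Set Bornology Matrix

/-- The `k`-th elementary symmetric function of `x ∈ ℝⁿ`. -/
noncomputable def esymm (n k : ℕ) (x : Fin n → ℝ) : ℝ :=
  ∑ s ∈ Finset.powersetCard k (Finset.univ : Finset (Fin n)), ∏ i ∈ s, x i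

/-- The Gårding cone `Γ_k = {λ : σ_i(λ) > 0 for 1 ≤ i ≤ k}`. -/
def GammaCone (n k : ℕ) : Set (Fin n → ℝ) :=
  {x | ∀ i : ℕ, 1 ≤ i → i ≤ k → 0 < esymm n i x}

/-- `η_i(κ) = ∑_{j ≠ i} κ_j`. -/
def etaVec {n : ℕ} (x : Fin n → ℝ) : Fin n → ℝ :=
  fun i => ∑ j ∈ Finset.univ.erase i, x j

/-- The cone `Γ̃_k = {κ : σ_i(η(κ)) > 0 for 1 ≤ i ≤ k}`. -/
def GammaTilde (n k : ℕ) : Set (Fin n → ℝ) := {x | etaVec x ∈ GammaCone n k}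

/-- `σ_k(x|i)`: the `k`-th elementary symmetric function of `x` with the `i`-th entry removed. -/
noncomputable def esymmRemoved (n k : ℕ) (i : Fin n) (x : Fin n → ℝ) : ℝ :=
  ∑ s ∈ Finset.powersetCard k ((Finset.univ : Finset (Fin n)).erase i), ∏ j ∈ s, x j

/-!
The sum of the partial derivatives is the derivative along `(1, …, 1)`, and
`d/dt σ_j(λ + t·1) = (n - j + 1) σ_{j-1}(λ)`. In terms of the normalized functions
`Q_j = σ_j / C_n^j`, the derivative of `F = (σ_k/σ_l)^{1/(k-l)}` along `(1, …, 1)` equals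
`F · (k Q_{k-1}/Q_k - l Q_{l-1}/Q_l) / (k - l)`. Newton's inequalities `Q_{j-1} Q_{j+1} ≤ Q_j²`
make the ratios `Q_{j-1}/Q_j` nondecreasing for `j ≤ k` on `Γ_k`, so the bracket is at least
`(k - l) Q_{k-1}/Q_k ≥ (k - l) (Q_l/Q_k)^{1/(k-l)}`, and the powers of `Q_k/Q_l` cancel.

Newton's inequalities are proved by induction on the number of variables: by Rolle's theorem
the derivative of `∏ (X - x_i)` has only real roots, and these have the same normalized
elementary symmetric functions `Q_j` for `j < n`. When `n = m + 2` the inequality for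
`(m, m + 1, m + 2)` is Cauchy–Schwarz applied to
`σ_{m+1}(x)² - 2 σ_m(x) σ_{m+2}(x) = σ_{m+1}(x₁², …, x_n²)`.
-/

theorem Finset.sum_powersetCard_succ_sum_prod_erase {ι R : Type*} [DecidableEq ι]
    [CommSemiring R] (u : Finset ι) (k : ℕ) (x : ι → R) :
    ∑ s ∈ u.powersetCard (k + 1), ∑ i ∈ s, ∏ j ∈ s.erase i, x j =
      (#u - k) • ∑ t ∈ u.powersetCard k, ∏ j ∈ t, x j := by
  have hcount (t) (ht : t ∈ u.powersetCard k) :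
      (#u - k) • ∏ j ∈ t, x j = ∑ i ∈ u \ t, ∏ j ∈ t, x j := by
    rw [mem_powersetCard] at ht
    rw [sum_const, card_sdiff_of_subset ht.1, ht.2]
  rw [smul_sum, sum_congr rfl hcount, sum_sigma', sum_sigma']
  refine sum_nbij' (fun p => ⟨p.1.erase p.2, p.2⟩) (fun p => ⟨insert p.2 p.1, p.2⟩)
    ?_ ?_ ?_ ?_ fun _ _ => rfl
  · rintro ⟨s, i⟩ hp
    simp only [mem_sigma, mem_powersetCard] at hp ⊢
    obtain ⟨⟨hsu, hcard⟩, his⟩ := hp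
    refine ⟨⟨(erase_subset _ _).trans hsu, ?_⟩, ?_⟩
    · rw [card_erase_of_mem his, hcard, Nat.add_sub_cancel]
    · exact mem_sdiff.2 ⟨hsu his, notMem_erase _ _⟩
  · rintro ⟨t, i⟩ hp
    simp only [mem_sigma, mem_powersetCard, mem_sdiff] at hp ⊢
    obtain ⟨⟨htu, hcard⟩, hiu, hit⟩ := hp
    exact ⟨⟨insert_subset hiu htu, by rw [card_insert_of_notMem hit, hcard]⟩,
      mem_insert_self _ _⟩
  · rintro ⟨s, i⟩ hp
    simp only [mem_sigma] at hp
    simp [insert_erase hp.2]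
  · rintro ⟨t, i⟩ hp
    simp only [mem_sigma, mem_sdiff] at hp
    simp [erase_insert hp.2.2]

namespace Multiset

section CommSemiring

variable {R : Type*} [CommSemiring R]

theorem esymm_zero (s : Multiset R) : s.esymm 0 = 1 := by
  simp [esymm]

theorem esymm_card (s : Multiset R) : s.esymm (card s) = s.prod := by
  simp [esymm, powersetCard_self]

theorem esymm_eq_zero_of_card_lt {s : Multiset R} {k : ℕ} (h : card s < k) : s.esymm k = 0 := by
  simp [esymm, powersetCard_eq_empty _ h]

theorem esymm_cons_succ (a : R) (s : Multiset R) (k : ℕ) :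
    (a ::ₘ s).esymm (k + 1) = a * s.esymm k + s.esymm (k + 1) := by
  simp [esymm, powersetCard_cons, sum_map_mul_left, add_comm]

end CommSemiring

theorem sq_esymm_sub_eq_esymm_map_sq {R : Type*} [CommRing R] (m : ℕ) {s : Multiset R}
    (hs : card s = m + 2) :
    s.esymm (m + 1) ^ 2 - 2 * s.esymm m * s.esymm (m + 2) = (s.map (· ^ 2)).esymm (m + 1) := by
  induction m generalizing s with
  | zero =>
    obtain ⟨a, b, rfl⟩ := card_eq_two.1 hs
    simp only [insert_eq_cons, map_cons, map_singleton, zero_add, esymm_zero, esymm_pair_one,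
      esymm_pair_two, mul_one]
    ring
  | succ m ih =>
    obtain ⟨a, t, rfl, ht⟩ := card_eq_succ_iff.1 hs
    have htop : (t.map (· ^ 2)).esymm (m + 2) = t.esymm (m + 2) ^ 2 := by
      rw [← ht, esymm_card, ← card_map (· ^ 2) t, esymm_card, prod_map_pow, map_id']
    simp only [map_cons, esymm_cons_succ, ← ih ht, htop,
      esymm_eq_zero_of_card_lt (show card t < m + 3 by omega)]
    ring

theorem sq_sum_map_le_card_mul_sum_map_sq {ι α : Type*} [CommRing α] [LinearOrder α]
    [IsStrictOrderedRing α] (T : Multiset ι) (f : ι → α) :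
    (T.map f).sum ^ 2 ≤ card T * (T.map (f · ^ 2)).sum := by
  classical
  have hsum (g : ι → α) : (T.map g).sum = ∑ x : T, g x := by
    conv_lhs => rw [← map_univ_coe T, map_map]
    rfl
  rw [hsum, hsum, ← card_coe, ← Finset.card_univ]
  exact sq_sum_le_card_mul_sum_sq

theorem sq_esymm_le_choose_mul_esymm_map_sq {α : Type*} [CommRing α] [LinearOrder α]
    [IsStrictOrderedRing α] (s : Multiset α) (k : ℕ) :
    s.esymm k ^ 2 ≤ (card s).choose k * (s.map (· ^ 2)).esymm k := by
  have h := sq_sum_map_le_card_mul_sum_map_sq (s.powersetCard k) prod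
  simpa [esymm, powersetCard_map, map_map, Function.comp_def, prod_map_pow] using h

-- The normalized `Q_k = σ_k / C_n^k`; it is `0` for `k > card s`, where `C_n^k = 0`.
noncomputable def esymmMean (s : Multiset ℝ) (k : ℕ) : ℝ := s.esymm k / (card s).choose k

theorem esymmMean_mul_esymmMean_le_sq_of_card_eq (m : ℕ) {s : Multiset ℝ}
    (hs : card s = m + 2) :
    s.esymmMean m * s.esymmMean (m + 2) ≤ s.esymmMean (m + 1) ^ 2 := by
  have hid := sq_esymm_sub_eq_esymm_map_sq m hs
  have hCS := sq_esymm_le_choose_mul_esymm_map_sq s (m + 1)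
  have hchoose : ((m + 2).choose m : ℝ) * 2 = (m + 2) * (m + 1) := by
    have h := Nat.choose_succ_right_eq (m + 2) m
    rw [Nat.choose_succ_self_right, show m + 2 - m = 2 by omega] at h
    exact_mod_cast h.symm
  simp only [esymmMean, hs, Nat.choose_self, Nat.choose_succ_self_right] at hCS ⊢
  push_cast at hCS ⊢
  rw [div_one, div_pow, div_mul_eq_mul_div,
    div_le_div_iff₀ (by exact_mod_cast Nat.choose_pos (by omega)) (by positivity)]
  nlinarith

open Polynomial in
theorem exists_esymmMean_eq_of_card_eq_succ {N : ℕ} {s : Multiset ℝ} (hs : card s = N + 1) :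
    ∃ t : Multiset ℝ, card t = N ∧ ∀ j ≤ N, t.esymmMean j = s.esymmMean j := by
  set p := (s.map fun a => X - C a).prod
  set q := derivative p
  have hp_deg : p.natDegree = N + 1 := (natDegree_multiset_prod_X_sub_C_eq_card s).trans hs
  have hp_coeff (j : ℕ) (hj : j ≤ N + 1) : p.coeff (N + 1 - j) = (-1) ^ j * s.esymm j := by
    rw [prod_X_sub_C_coeff s (by omega), hs, Nat.sub_sub_self hj]
  have hq_coeff (j : ℕ) (hj : j ≤ N) :
      q.coeff (N - j) = (-1) ^ j * s.esymm j * ((N + 1 - j : ℕ) : ℝ) := by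
    rw [coeff_derivative, show N - j + 1 = N + 1 - j by omega, hp_coeff j (by omega)]
    push_cast [Nat.sub_add_comm hj]
    ring
  have hq_lead : q.coeff N = N + 1 := by
    simpa [esymm_zero] using hq_coeff 0 N.zero_le
  have hq_deg : q.natDegree = N := by
    refine le_antisymm ?_ (le_natDegree_of_ne_zero (by rw [hq_lead]; positivity))
    have h := natDegree_derivative_le p
    rwa [hp_deg, Nat.add_sub_cancel] at h
  -- Rolle's theorem: between consecutive roots of `p` lies a root of `q`
  have hq_card : card q.roots = N := by
    have h := card_roots_le_derivative p
    rw [roots_multiset_prod_X_sub_C, hs] at h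
    change N + 1 ≤ card q.roots + 1 at h
    exact le_antisymm (hq_deg ▸ card_roots' q) (by omega)
  have hq_prod : C (N + 1 : ℝ) * (q.roots.map fun a => X - C a).prod = q := by
    rw [← hq_lead, ← hq_deg]
    exact C_leadingCoeff_mul_prod_multiset_X_sub_C (hq_card.trans hq_deg.symm)
  refine ⟨q.roots, hq_card, fun j hj => ?_⟩
  have hcoeff := hq_coeff j hj
  rw [← hq_prod, coeff_C_mul, prod_X_sub_C_coeff _ (by omega), hq_card,
    Nat.sub_sub_self hj] at hcoeff
  have hroots : (N + 1) * q.roots.esymm j = s.esymm j * (N + 1 - j : ℕ) :=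
    mul_left_cancel₀ (pow_ne_zero j (neg_ne_zero.2 one_ne_zero)) (by linear_combination hcoeff)
  have hchoose : (N.choose j : ℝ) * (N + 1) = (N + 1).choose j * (N + 1 - j : ℕ) := by
    exact_mod_cast Nat.choose_mul_succ_eq N j
  simp only [esymmMean, hq_card, hs]
  rw [div_eq_div_iff (by exact_mod_cast (Nat.choose_pos hj).ne')
    (by exact_mod_cast (Nat.choose_pos (by omega : j ≤ N + 1)).ne')]
  refine mul_right_cancel₀ (show ((N + 1 - j : ℕ) : ℝ) ≠ 0 by norm_cast; omega) ?_
  linear_combination N.choose j * hroots - q.roots.esymm j * hchoose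

theorem esymmMean_mul_esymmMean_le_sq (s : Multiset ℝ) (m : ℕ) :
    s.esymmMean m * s.esymmMean (m + 2) ≤ s.esymmMean (m + 1) ^ 2 := by
  obtain hlt | hle := lt_or_ge (card s) (m + 2)
  · simp [esymmMean, Nat.choose_eq_zero_of_lt hlt, sq_nonneg]
  obtain ⟨d, hd⟩ : ∃ d, card s = m + 2 + d := ⟨_, (Nat.add_sub_cancel' hle).symm⟩
  induction d generalizing s with
  | zero => exact esymmMean_mul_esymmMean_le_sq_of_card_eq m hd
  | succ d ih =>
    obtain ⟨t, ht, hts⟩ := exists_esymmMean_eq_of_card_eq_succ (N := m + 2 + d) hd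
    rw [← hts m (by omega), ← hts (m + 1) (by omega), ← hts (m + 2) (by omega)]
    exact ih t (by omega) ht

end Multiset

section LogConcave

variable {Q : ℕ → ℝ} {k : ℕ}

theorem div_succ_le_div_succ_of_mul_le_sq (hpos : ∀ j ≤ k, 0 < Q j)
    (hQ : ∀ j, Q j * Q (j + 2) ≤ Q (j + 1) ^ 2) {i j : ℕ} (hij : i ≤ j) (hjk : j < k) :
    Q i / Q (i + 1) ≤ Q j / Q (j + 1) := by
  induction j, hij using Nat.le_induction with
  | base => rfl
  | succ j hij ih =>
    refine (ih (by omega)).trans ?_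
    rw [div_le_div_iff₀ (hpos _ (by omega)) (hpos _ (by omega)), ← sq]
    exact hQ j

theorem div_le_pow_of_div_succ_le (hpos : ∀ j ≤ k, 0 < Q j) {l : ℕ} (hlk : l ≤ k) {r : ℝ}
    (hr : ∀ j, l ≤ j → j < k → Q j / Q (j + 1) ≤ r) :
    Q l / Q k ≤ r ^ (k - l) := by
  induction k, hlk using Nat.le_induction with
  | base => rw [div_self (hpos l le_rfl).ne', Nat.sub_self, pow_zero]
  | succ k hlk ih =>
    have hQk := hpos k (by omega)
    have hr0 : 0 ≤ r := (div_pos (hpos l (by omega)) (hpos _ (by omega))).le.trans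
      (hr l le_rfl (by omega))
    calc Q l / Q (k + 1) = Q l / Q k * (Q k / Q (k + 1)) := by field_simp
      _ ≤ r ^ (k - l) * r :=
        mul_le_mul (ih (fun j hj => hpos j (by omega)) fun j hlj hjk => hr j hlj (by omega))
          (hr k hlk (by omega)) (div_pos hQk (hpos _ le_rfl)).le (pow_nonneg hr0 _)
      _ = r ^ (k + 1 - l) := by rw [← pow_succ, Nat.sub_add_comm hlk]

theorem one_le_mul_rpow_div_mul_sub_of_mul_le_sq (hpos : ∀ j ≤ k, 0 < Q j)
    (hQ : ∀ j, Q j * Q (j + 2) ≤ Q (j + 1) ^ 2) {l : ℕ} (hlk : l < k) :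
    1 ≤ 1 / ((k : ℝ) - l) * (Q k / Q l) ^ (1 / ((k : ℝ) - l)) *
      (k * (Q (k - 1) / Q k) - l * (Q (l - 1) / Q l)) := by
  set c := 1 / ((k : ℝ) - l)
  have hkl : (0 : ℝ) < k - l := sub_pos.2 (by exact_mod_cast hlk)
  have hQk := hpos k le_rfl
  have hQl := hpos l hlk.le
  set r := Q (k - 1) / Q k
  have hr (j : ℕ) (hj : j < k) : Q j / Q (j + 1) ≤ r := by
    have h := div_succ_le_div_succ_of_mul_le_sq hpos hQ (by omega : j ≤ k - 1) (by omega)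
    rwa [Nat.sub_add_cancel (by omega : 1 ≤ k)] at h
  have hr_pos : 0 < r := div_pos (hpos _ (by omega)) hQk
  have hgeom : (Q l / Q k) ^ c ≤ r :=
    calc (Q l / Q k) ^ c ≤ (r ^ (k - l)) ^ c :=
          Real.rpow_le_rpow (div_pos hQl hQk).le
            (div_le_pow_of_div_succ_le hpos hlk.le fun j _ hj => hr j hj) (by positivity)
      _ = r := by
          rw [← Real.rpow_natCast, ← Real.rpow_mul hr_pos.le, Nat.cast_sub hlk.le,
            mul_one_div_cancel hkl.ne', Real.rpow_one]
  have hl : l * (Q (l - 1) / Q l) ≤ l * r := by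
    rcases Nat.eq_zero_or_pos l with rfl | hl
    · simp
    · have h := hr (l - 1) (by omega)
      rw [Nat.sub_add_cancel hl] at h
      gcongr
  have hinv : (Q k / Q l) ^ c * (Q l / Q k) ^ c = 1 := by
    rw [← Real.mul_rpow (div_pos hQk hQl).le (div_pos hQl hQk).le,
      show Q k / Q l * (Q l / Q k) = 1 by field_simp, Real.one_rpow]
  calc 1 = (Q k / Q l) ^ c * (Q l / Q k) ^ c := hinv.symm
    _ ≤ (Q k / Q l) ^ c * r := by gcongr
    _ = c * (Q k / Q l) ^ c * ((k - l) * r) := by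
        rw [mul_mul_mul_comm, one_div_mul_cancel hkl.ne', one_mul]
    _ ≤ c * (Q k / Q l) ^ c * (k * r - l * (Q (l - 1) / Q l)) := by gcongr; linarith

end LogConcave

theorem HasLineDerivAt.div_rpow_const {E : Type*} [NormedAddCommGroup E] [NormedSpace ℝ E]
    {u v : E → ℝ} {u' v' : ℝ} {x w : E} (hu : HasLineDerivAt ℝ u u' x w)
    (hv : HasLineDerivAt ℝ v v' x w) (hux : 0 < u x) (hvx : 0 < v x) (c : ℝ) :
    HasLineDerivAt ℝ (fun y => (u y / v y) ^ c)
      (c * (u x / v x) ^ c * (u' / u x - v' / v x)) x w := by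
  unfold HasLineDerivAt at *
  have hx : x + (0 : ℝ) • w = x := by simp
  have h := (hu.fun_div hv (by rw [hx]; exact hvx.ne')).rpow_const (p := c)
    (Or.inl (by rw [hx]; exact (div_pos hux hvx).ne'))
  rw [hx] at h
  refine h.congr_deriv ?_
  rw [Real.rpow_sub_one (div_pos hux hvx).ne']
  field_simp

theorem differentiable_esymm (n k : ℕ) : Differentiable ℝ (esymm n k) := by
  unfold esymm
  fun_prop

theorem hasLineDerivAt_esymm_succ (n m : ℕ) (x : Fin n → ℝ) :
    HasLineDerivAt ℝ (esymm n (m + 1)) ((n - m : ℕ) * esymm n m x) x 1 := by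
  have hline : (fun t : ℝ => esymm n (m + 1) (x + t • 1)) =
      fun t => ∑ s ∈ Finset.powersetCard (m + 1) univ, ∏ i ∈ s, (x i + t) := by
    ext t
    simp [esymm]
  have hprod (s : Finset (Fin n)) :
      HasDerivAt (fun t : ℝ => ∏ i ∈ s, (x i + t))
        (∑ i ∈ s, ∏ j ∈ s.erase i, x j) 0 := by
    simpa using HasDerivAt.fun_finsetProd (u := s) (x := (0 : ℝ))
      fun i _ => (hasDerivAt_id (0 : ℝ)).const_add (x i)
  have h := HasDerivAt.fun_sum fun s (_ : s ∈ Finset.powersetCard (m + 1) univ) => hprod s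
  rw [Finset.sum_powersetCard_succ_sum_prod_erase, card_univ, Fintype.card_fin, nsmul_eq_mul] at h
  rw [HasLineDerivAt, hline]
  exact h

theorem esymm_eq_choose_mul_esymmMean {n k : ℕ} (hk : k ≤ n) (x : Fin n → ℝ) :
    esymm n k x = n.choose k * (univ.val.map x).esymmMean k := by
  have hC : (n.choose k : ℝ) ≠ 0 := by exact_mod_cast (Nat.choose_pos hk).ne'
  rw [Multiset.esymmMean, Finset.esymm_map_val, Multiset.card_map, card_val, card_univ,
    Fintype.card_fin, mul_div_cancel₀ _ hC]
  rfl

theorem hasLineDerivAt_esymm {n j : ℕ} (hj : j ≤ n) (x : Fin n → ℝ) :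
    HasLineDerivAt ℝ (esymm n j) (j * n.choose j * (univ.val.map x).esymmMean (j - 1)) x 1 := by
  cases j with
  | zero =>
    have h : esymm n 0 = fun _ => 1 := funext fun y => by simp [esymm]
    rw [h, Nat.cast_zero, zero_mul, zero_mul]
    exact hasDerivAt_const _ _
  | succ m =>
    have hchoose : (n.choose (m + 1) : ℝ) * (m + 1) = n.choose m * (n - m : ℕ) := by
      exact_mod_cast Nat.choose_succ_right_eq n m
    convert hasLineDerivAt_esymm_succ n m x using 1
    rw [Nat.add_sub_cancel, esymm_eq_choose_mul_esymmMean (by omega)]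
    push_cast
    linear_combination (Multiset.esymmMean (univ.val.map x) m) * hchoose

theorem esymm_pos_of_mem_gammaCone {n k j : ℕ} {x : Fin n → ℝ} (hx : x ∈ GammaCone n k)
    (hj : j ≤ k) : 0 < esymm n j x := by
  rcases Nat.eq_zero_or_pos j with rfl | hj0
  · simp [esymm]
  · exact hx j hj0 hj

theorem esymmMean_pos_of_mem_gammaCone {n k j : ℕ} {x : Fin n → ℝ} (hx : x ∈ GammaCone n k)
    (hkn : k ≤ n) (hj : j ≤ k) : 0 < (univ.val.map x).esymmMean j := by
  have h := esymm_pos_of_mem_gammaCone hx hj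
  rw [esymm_eq_choose_mul_esymmMean (hj.trans hkn)] at h
  exact pos_of_mul_pos_right h (Nat.cast_nonneg _)

theorem differentiableAt_esymm_div_rpow {n k l : ℕ} {x : Fin n → ℝ} (hx : x ∈ GammaCone n k)
    (hlk : l < k) (c : ℝ) :
    DifferentiableAt ℝ (fun y => (esymm n k y / esymm n l y) ^ c) x := by
  have hU := esymm_pos_of_mem_gammaCone hx le_rfl
  have hV := esymm_pos_of_mem_gammaCone hx hlk.le
  have := differentiable_esymm n k
  have := differentiable_esymm n l
  fun_prop (disch := first | exact hV.ne' | exact Or.inl (div_pos hU hV).ne')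

/-- For `0 ≤ l < k ≤ n` and every `λ ∈ Γ_k`,
`∑_i ∂[(σ_k(λ)/σ_l(λ))^{1/(k−l)}]/∂λ_i ≥ (C_n^k/C_n^l)^{1/(k−l)}`. -/
theorem statement_7 (n k l : ℕ) (hlk : l < k) (hkn : k ≤ n)
    (lam : Fin n → ℝ) (hlam : lam ∈ GammaCone n k) :
    ((n.choose k : ℝ) / (n.choose l : ℝ)) ^ ((1 : ℝ) / ((k : ℝ) - (l : ℝ))) ≤
      ∑ i : Fin n,
        fderiv ℝ (fun y : Fin n → ℝ =>
            (esymm n k y / esymm n l y) ^ ((1 : ℝ) / ((k : ℝ) - (l : ℝ)))) lam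
          (Pi.single i 1) := by
  set c := (1 : ℝ) / ((k : ℝ) - (l : ℝ))
  have hU := esymm_eq_choose_mul_esymmMean hkn lam
  have hV := esymm_eq_choose_mul_esymmMean (hlk.le.trans hkn) lam
  have hD := (hasLineDerivAt_esymm hkn lam).div_rpow_const
    (hasLineDerivAt_esymm (hlk.le.trans hkn) lam) (esymm_pos_of_mem_gammaCone hlam le_rfl)
    (esymm_pos_of_mem_gammaCone hlam hlk.le) c
  have hsingle : ∑ i : Fin n, Pi.single i (1 : ℝ) = 1 := Finset.univ_sum_single 1
  have hF := (differentiableAt_esymm_div_rpow hlam hlk c).hasFDerivAt.hasLineDerivAt 1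
  rw [← map_sum, hsingle, hF.unique hD, hU, hV]
  set Q := (univ.val.map lam).esymmMean
  have hpos (j : ℕ) (hj : j ≤ k) : 0 < Q j := esymmMean_pos_of_mem_gammaCone hlam hkn hj
  have key := one_le_mul_rpow_div_mul_sub_of_mul_le_sq hpos
    (fun j => Multiset.esymmMean_mul_esymmMean_le_sq _ j) hlk
  have hCk : (0 : ℝ) < n.choose k := by exact_mod_cast Nat.choose_pos hkn
  have hCl : (0 : ℝ) < n.choose l := by exact_mod_cast Nat.choose_pos (by omega)
  have hQk := hpos k le_rfl
  have hQl := hpos l hlk.le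
  calc (n.choose k / n.choose l : ℝ) ^ c = (n.choose k / n.choose l : ℝ) ^ c * 1 :=
        (mul_one _).symm
    _ ≤ (n.choose k / n.choose l : ℝ) ^ c *
          (c * (Q k / Q l) ^ c * (k * (Q (k - 1) / Q k) - l * (Q (l - 1) / Q l))) := by gcongr
    _ = _ := by
      rw [mul_div_mul_comm, Real.mul_rpow (by positivity) (div_pos hQk hQl).le]
      field_simp
end

section
/- Let 1 ≤ k ≤ n and λ ∈ Γ_k with λ_1 ≥ λ_2 ≥ ⋯ ≥ λ_n. Then σ_{k−1}(λ|1) ≤ σ_{k−1}(λ|2) ≤ ⋯ ≤ σ_{k−1}(λ|n). -/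
open Finset MeasureTheory Metric Set Bornology Matrix

/-
For `i < j` write `λ|ij` for `λ` with both entries removed. Expanding in the remaining entry,
`σ_{k-1}(λ|j) - σ_{k-1}(λ|i) = (λ_i - λ_j) σ_{k-2}(λ|ij)`, so it suffices that `σ_{k-2}(λ|ij) > 0`.
This follows from `μ ∈ Γ_k ⇒ μ|i ∈ Γ_{k-1}`, applied twice. Writing `μ = (a, ν)`, the recurrence
`σ_{m+1}(μ) = σ_{m+1}(ν) + a σ_m(ν)` together with the (unnormalised) Newton inequality
`σ_m(ν) σ_{m+2}(ν) ≤ σ_{m+1}(ν)²` forbids the first sign change of `σ_m(ν)` before `m = k`.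
Newton's inequality is read off the coefficients of the real-rooted polynomial `∏ (X + ν_i)`:
by Rolle its derivatives stay real-rooted, which reduces it to the three lowest coefficients,
and `2 a₀ a₂ ≤ a₁²` is preserved under multiplication by `X - a`.
-/

open scoped Nat

namespace Polynomial

theorem card_roots_derivative_eq_natDegree {p : ℝ[X]}
    (hp : Multiset.card p.roots = p.natDegree) :
    Multiset.card (derivative p).roots = (derivative p).natDegree := by
  have := p.card_roots_le_derivative
  have := natDegree_derivative_le p
  have := (derivative p).card_roots'
  omega

theorem card_roots_iterate_derivative_eq_natDegree {p : ℝ[X]}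
    (hp : Multiset.card p.roots = p.natDegree) (j : ℕ) :
    Multiset.card (derivative^[j] p).roots = (derivative^[j] p).natDegree := by
  induction j with
  | zero => exact hp
  | succ j ih =>
    rw [Function.iterate_succ_apply']
    exact card_roots_derivative_eq_natDegree ih

theorem two_mul_coeff_zero_mul_coeff_two_le_sq {p : ℝ[X]}
    (hp : Multiset.card p.roots = p.natDegree) :
    2 * p.coeff 0 * p.coeff 2 ≤ p.coeff 1 ^ 2 := by
  rw [← C_leadingCoeff_mul_prod_multiset_X_sub_C hp]
  induction p.roots using Multiset.induction with
  | empty => simp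
  | cons a s ih =>
    set q := C p.leadingCoeff * (s.map fun a => X - C a).prod
    have hq : C p.leadingCoeff * ((a ::ₘ s).map fun a => X - C a).prod = (X - C a) * q := by
      rw [Multiset.map_cons, Multiset.prod_cons, mul_left_comm]
    have h0 : ((X - C a) * q).coeff 0 = -a * q.coeff 0 := by simp [mul_coeff_zero]
    rw [hq, h0, coeff_X_sub_C_mul, coeff_X_sub_C_mul]
    -- `a₁'² - 2 a₀' a₂' = a₀² + a² (a₁² - 2 a₀ a₂)`
    nlinarith [sq_nonneg (q.coeff 0), mul_le_mul_of_nonneg_left ih (sq_nonneg a)]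

theorem coeff_mul_coeff_add_two_le_sq {p : ℝ[X]}
    (hp : Multiset.card p.roots = p.natDegree) (j : ℕ) :
    p.coeff j * p.coeff (j + 2) ≤ p.coeff (j + 1) ^ 2 := by
  have h :=
    two_mul_coeff_zero_mul_coeff_two_le_sq (card_roots_iterate_derivative_eq_natDegree hp j)
  -- the `j`-th derivative starts with `j! a_j + (j+1)! a_{j+1} X + (j+2)!/2 a_{j+2} X² + ⋯`
  simp only [coeff_iterate_derivative, nsmul_eq_mul] at h
  rw [zero_add, Nat.add_comm 1, Nat.add_comm 2, Nat.descFactorial_self] at h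
  have e₁ : (j + 1).descFactorial j = (j + 1)! := by
    simpa using Nat.factorial_mul_descFactorial (by omega : j ≤ j + 1)
  have e₂ : 2 * (j + 2).descFactorial j = (j + 2)! := by
    simpa using Nat.factorial_mul_descFactorial (by omega : j ≤ j + 2)
  have e₂' : 2 * ((j + 2).descFactorial j : ℝ) = (j + 2) * ((j + 1) * j !) := by
    exact_mod_cast e₂.trans (by simp [Nat.factorial_succ])
  rw [e₁, Nat.factorial_succ, Nat.cast_mul] at h
  have hnormalised : (j + 2) * (p.coeff j * p.coeff (j + 2)) ≤ (j + 1) * p.coeff (j + 1) ^ 2 := by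
    refine le_of_mul_le_mul_left ?_ (by positivity : (0 : ℝ) < (j + 1) * j ! ^ 2)
    push_cast at h
    linear_combination h - (j ! * p.coeff j * p.coeff (j + 2)) * e₂'
  nlinarith [sq_nonneg (p.coeff (j + 1))]

end Polynomial

namespace Multiset

theorem esymm_cons {R : Type*} [CommSemiring R] (a : R) (s : Multiset R) (m : ℕ) :
    (a ::ₘ s).esymm (m + 1) = s.esymm (m + 1) + a * s.esymm m := by
  simp only [esymm, powersetCard_cons, map_add, sum_add, map_map, Function.comp_def, prod_cons,
    ← sum_map_mul_left]

open Polynomial in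
theorem esymm_mul_esymm_add_two_le_sq (s : Multiset ℝ) (m : ℕ) :
    s.esymm m * s.esymm (m + 2) ≤ s.esymm (m + 1) ^ 2 := by
  rcases lt_or_ge (card s) (m + 2) with hlt | hle
  · rw [show s.esymm (m + 2) = 0 by simp [esymm, powersetCard_eq_empty _ hlt], mul_zero]
    positivity
  set p := (s.map fun r => X + C r).prod with hp_def
  have hp : Multiset.card p.roots = p.natDegree := by
    have : (s.map fun r => X + C r) = (s.map Neg.neg).map fun r => X - C r := by
      simp [map_map, sub_eq_add_neg]
    rw [hp_def, this, roots_multiset_prod_X_sub_C, natDegree_multiset_prod_X_sub_C_eq_card]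
  have h := coeff_mul_coeff_add_two_le_sq hp (card s - (m + 2))
  rw [prod_X_add_C_coeff s (by omega), prod_X_add_C_coeff s (by omega),
    prod_X_add_C_coeff s (by omega)] at h
  rwa [show card s - (card s - (m + 2)) = m + 2 by omega,
    show card s - (card s - (m + 2) + 1) = m + 1 by omega,
    show card s - (card s - (m + 2) + 2) = m by omega, mul_comm] at h

theorem esymm_pos_of_esymm_cons_pos {a : ℝ} {s : Multiset ℝ} {k : ℕ}
    (h : ∀ m ≤ k + 1, 0 < (a ::ₘ s).esymm m) : ∀ m ≤ k, 0 < s.esymm m := by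
  intro m hm
  induction m with
  | zero => simp [esymm]
  | succ m ih =>
    have hu := ih (by omega)
    by_contra! hv
    have h₁ := h (m + 1) (by omega)
    have h₂ := h (m + 2) (by omega)
    rw [esymm_cons] at h₁ h₂
    have := esymm_mul_esymm_add_two_le_sq s m
    -- `a σ_m > -σ_{m+1} ≥ 0` and `σ_{m+2} > -a σ_{m+1}` give `σ_m σ_{m+2} > σ_{m+1}²`
    nlinarith [mul_pos hu h₂, mul_nonneg h₁.le (neg_nonneg.2 hv)]

end Multiset

theorem statement_9_general (n k : ℕ)
    (lam : Fin n → ℝ) (hlam : lam ∈ GammaCone n k)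
    (hsort : ∀ i j : Fin n, i ≤ j → lam j ≤ lam i) :
    ∀ i j : Fin n, i ≤ j →
      esymmRemoved n (k - 1) i lam ≤ esymmRemoved n (k - 1) j lam := by
  intro i j hij
  rcases hij.eq_or_lt with rfl | hlt
  · rfl
  have hσ (t : Finset (Fin n)) (m : ℕ) :
      ∑ s ∈ t.powersetCard m, ∏ j ∈ s, lam j = (t.val.map lam).esymm m :=
    (t.esymm_map_val lam m).symm
  have hcons (t : Finset (Fin n)) (a : Fin n) (ha : a ∈ t) :
      t.val.map lam = lam a ::ₘ (t.erase a).val.map lam := by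
    rw [erase_val, ← Multiset.map_cons, Multiset.cons_erase ha]
  set T := ((univ.erase i).erase j).val.map lam
  have hi : (univ.erase i).val.map lam = lam j ::ₘ T := hcons _ j (by simp [hlt.ne'])
  have hj : (univ.erase j).val.map lam = lam i ::ₘ T := by
    rw [hcons _ i (by simp [hlt.ne]), erase_right_comm]
  rcases Nat.lt_or_ge k 2 with hk | hk
  · simp [show k - 1 = 0 by omega, esymmRemoved]
  obtain ⟨m, rfl⟩ := Nat.exists_eq_add_of_le' hk
  have hΓ : ∀ l ≤ m + 2, 0 < (lam i ::ₘ lam j ::ₘ T).esymm l := by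
    intro l hl
    rcases l with _ | l
    · simp [Multiset.esymm]
    · rw [← hi, ← hcons _ i (mem_univ i), ← hσ]
      exact hlam (l + 1) (by omega) hl
  have hT : 0 < T.esymm m :=
    Multiset.esymm_pos_of_esymm_cons_pos (Multiset.esymm_pos_of_esymm_cons_pos hΓ) m le_rfl
  rw [show m + 2 - 1 = m + 1 by rfl, esymmRemoved, esymmRemoved, hσ, hσ, hi, hj,
    Multiset.esymm_cons, Multiset.esymm_cons]
  exact add_le_add_right (mul_le_mul_of_nonneg_right (hsort i j hij) hT.le) _

/-- For `1 ≤ k ≤ n` and `λ ∈ Γ_k` ordered decreasingly `λ_1 ≥ ⋯ ≥ λ_n`,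
one has `σ_{k−1}(λ|1) ≤ σ_{k−1}(λ|2) ≤ ⋯ ≤ σ_{k−1}(λ|n)`. -/
theorem statement_9 (n k : ℕ) (hk1 : 1 ≤ k) (hkn : k ≤ n)
    (lam : Fin n → ℝ) (hlam : lam ∈ GammaCone n k)
    (hsort : ∀ i j : Fin n, i ≤ j → lam j ≤ lam i) :
    ∀ i j : Fin n, i ≤ j →
      esymmRemoved n (k - 1) i lam ≤ esymmRemoved n (k - 1) j lam :=
  statement_9_general n k lam hlam hsort
end

section
/- (Generalized Newton–MacLaurin inequality) Let λ ∈ Γ_k and n ≥ k > l ≥ 0, n ≥ r > s ≥ 0 with k ≥ r and l ≥ s. Then [ (σ_k(λ)/C_n^k) / (σ_l(λ)/C_n^l) ]^{1/(k−l)} ≤ [ (σ_r(λ)/C_n^r) / (σ_s(λ)/C_n^s) ]^{1/(r−s)}, where C_n^k = binom(n,k). -/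
open Finset MeasureTheory Metric Set Bornology Matrix

/-
Newton's inequality: the normalized elementary symmetric functions `E_i = σ_i / C(n, i)` of any
real vector satisfy `E_i E_{i+2} ≤ E_{i+1}²`. Indeed `∏ (X + λ_j)` has only real roots, and so
does every polynomial obtained from it by differentiating (Rolle) and reversing. Differentiating
it `n - i - 2` times, reversing, and differentiating `i` times leaves a real-rooted quadratic
whose discriminant is, up to a positive factor, `E_{i+1}² - E_i E_{i+2}`.

On `Γ_k` the `E_i` with `i ≤ k` are positive, so `i ↦ log E_i` is concave on `{0, …, k}` and its
chord slopes decrease: the slope over `[l, k]` is at most the slope over `[s, r]` when `s ≤ l` and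
`r ≤ k`. Exponentiating gives the claim.
-/

open Polynomial

namespace Polynomial

theorem Splits.derivative {p : ℝ[X]} (hp : p.Splits) : (derivative p).Splits := by
  rw [splits_iff_card_roots] at hp ⊢
  refine le_antisymm (card_roots' _) ?_
  have := p.card_roots_le_derivative
  have := p.natDegree_derivative_le
  omega

theorem Splits.hasseDeriv {p : ℝ[X]} (hp : p.Splits) (k : ℕ) : (hasseDeriv k p).Splits := by
  have hiter : (Polynomial.derivative^[k] p).Splits := by
    induction k with
    | zero => exact hp
    | succ k ih => rw [Function.iterate_succ_apply']; exact ih.derivative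
  have h := congrFun (factorial_smul_hasseDeriv (R := ℝ) (k := k)) p
  rw [LinearMap.smul_apply, nsmul_eq_mul] at h
  have : Polynomial.hasseDeriv k p = C ((k.factorial : ℝ)⁻¹) * Polynomial.derivative^[k] p := by
    rw [← h, ← mul_assoc, ← C_eq_natCast, ← C_mul, inv_mul_cancel₀ (by positivity), C_1, one_mul]
  rw [this]
  exact hiter.C_mul _

theorem Splits.reverse {K : Type*} [Field K] {p : K[X]} (hp : p.Splits) : p.reverse.Splits := by
  have hlin : ∀ f : K[X], f.natDegree ≤ 1 → f.reverse.Splits := fun f hf =>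
    Splits.of_natDegree_le_one ((reverse_natDegree_le f).trans hf)
  have hprod : ∀ s : Multiset K, ((s.map fun a => X - C a).prod).reverse.Splits := by
    intro s
    induction s using Multiset.induction with
    | empty => exact hlin _ (by simp)
    | cons a t ih =>
      rw [Multiset.map_cons, Multiset.prod_cons, reverse_mul_of_domain]
      exact (hlin _ (natDegree_X_sub_C a).le).mul ih
  rw [hp.eq_prod_roots, reverse_mul_of_domain]
  exact (hlin _ (by simp)).mul (hprod _)

theorem Splits.discrim_nonneg {K : Type*} [Field K] [LinearOrder K] [IsStrictOrderedRing K]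
    {q : K[X]} (hq : q.Splits) (hdeg : q.natDegree ≤ 2) :
    0 ≤ discrim (q.coeff 2) (q.coeff 1) (q.coeff 0) := by
  by_cases h2 : q.coeff 2 = 0
  · rw [discrim, h2]
    simpa using sq_nonneg (q.coeff 1)
  have hdeg2 : q.natDegree = 2 := le_antisymm hdeg (le_natDegree_of_ne_zero h2)
  obtain ⟨x, hx⟩ := hq.exists_eval_eq_zero (degree_ne_of_natDegree_ne (by rw [hdeg2]; decide))
  rw [eval_eq_sum_range, hdeg2] at hx
  simp only [sum_range_succ, sum_range_zero] at hx
  rw [discrim_eq_sq_of_quadratic_eq_zero (x := x) (by linear_combination hx)]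
  exact sq_nonneg _

theorem newton_inequality_of_splits {p : ℝ[X]} (hp : p.Splits) {a b : ℕ}
    (hdeg : p.natDegree = a + b + 2) :
    ((a + 2) * (b + 2) : ℝ) * (p.coeff a * p.coeff (a + 2)) ≤
      ((a + 1) * (b + 1) : ℝ) * p.coeff (a + 1) ^ 2 := by
  set q := hasseDeriv b (hasseDeriv a p).reverse
  have hdega : (hasseDeriv a p).natDegree = b + 2 := by rw [natDegree_hasseDeriv, hdeg]; omega
  have hdegq : q.natDegree ≤ 2 := by
    rw [natDegree_hasseDeriv]
    have := reverse_natDegree_le (hasseDeriv a p)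
    omega
  have hcoeff : ∀ j ≤ 2, q.coeff j =
      ((j + b).choose b : ℝ) * ((2 - j + a).choose a : ℝ) * p.coeff (2 - j + a) := by
    intro j hj
    rw [hasseDeriv_coeff, coeff_reverse, hdega, revAt_le (by omega), hasseDeriv_coeff,
      show b + 2 - (j + b) = 2 - j by omega, mul_assoc]
  have hdisc := ((hp.hasseDeriv a).reverse.hasseDeriv b).discrim_nonneg hdegq
  have hchoose : ∀ m : ℕ, ((m + 2).choose m : ℝ) = (m + 2) * (m + 1) / 2 := fun m => by
    rw [Nat.choose_symm_add, Nat.cast_choose_two]; push_cast; ring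
  rw [hcoeff 2 le_rfl, hcoeff 1 one_le_two, hcoeff 0 zero_le_two, discrim] at hdisc
  simp only [Nat.sub_self, Nat.sub_zero, zero_add, Nat.choose_self, Nat.choose_succ_self_right,
    hchoose, show 2 - 1 = 1 from rfl, add_comm 1, add_comm 2] at hdisc
  push_cast at hdisc
  have hpos : (0 : ℝ) < (a + 1) * (b + 1) := by positivity
  refine le_of_mul_le_mul_left ?_ hpos
  linear_combination hdisc

end Polynomial

theorem esymm_eq_coeff_prod {n : ℕ} (x : Fin n → ℝ) {m : ℕ} (hm : m ≤ n) :
    esymm n (n - m) x = (∏ j, (X + C (x j))).coeff m := by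
  rw [Finset.prod_X_add_C_coeff _ _ (by simpa using hm)]
  simp [esymm]

theorem esymm_mul_esymm_le {n i j : ℕ} (x : Fin n → ℝ) (hn : i + j + 2 = n) :
    ((i + 2) * (j + 2) : ℝ) * (esymm n i x * esymm n (i + 2) x) ≤
      ((i + 1) * (j + 1) : ℝ) * esymm n (i + 1) x ^ 2 := by
  have hdeg : (∏ k, (X + C (x k))).natDegree = j + i + 2 := by
    rw [natDegree_prod _ _ fun k _ => X_add_C_ne_zero (x k)]
    simp only [natDegree_X_add_C, sum_const, card_univ, Fintype.card_fin, smul_eq_mul, mul_one]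
    omega
  have hsplits : (∏ k, (X + C (x k))).Splits := Splits.prod fun k _ => Splits.X_add_C (x k)
  have h := newton_inequality_of_splits hsplits hdeg
  rw [← esymm_eq_coeff_prod x (by omega), ← esymm_eq_coeff_prod x (by omega),
    ← esymm_eq_coeff_prod x (by omega), show n - j = i + 2 by omega,
    show n - (j + 1) = i + 1 by omega, show n - (j + 2) = i by omega] at h
  linear_combination h

theorem choose_succ_sq_mul (i j : ℕ) :
    (i + j + 2).choose (i + 1) ^ 2 * ((i + 1) * (j + 1)) =
      (i + j + 2).choose i * (i + j + 2).choose (i + 2) * ((i + 2) * (j + 2)) := by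
  have h₁ := Nat.choose_succ_right_eq (i + j + 2) i
  have h₂ := Nat.choose_succ_right_eq (i + j + 2) (i + 1)
  rw [show i + j + 2 - i = j + 2 by omega] at h₁
  rw [show i + j + 2 - (i + 1) = j + 1 by omega] at h₂
  calc _ = ((i + j + 2).choose (i + 1) * (i + 1)) * ((i + j + 2).choose (i + 1) * (j + 1)) := by
        ring
    _ = ((i + j + 2).choose i * (j + 2)) * ((i + j + 2).choose (i + 2) * (i + 2)) := by
        rw [h₁, ← h₂]
    _ = _ := by ring

theorem esymm_div_choose_mul_le_sq {n : ℕ} (x : Fin n → ℝ) {i : ℕ} (hi : i + 2 ≤ n) :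
    esymm n i x / n.choose i * (esymm n (i + 2) x / n.choose (i + 2)) ≤
      (esymm n (i + 1) x / n.choose (i + 1)) ^ 2 := by
  obtain ⟨j, rfl⟩ : ∃ j, n = i + j + 2 := ⟨n - i - 2, by omega⟩
  have hnewton := esymm_mul_esymm_le x rfl
  have hchoose : ((i + j + 2).choose (i + 1) : ℝ) ^ 2 * ((i + 1) * (j + 1)) =
      (i + j + 2).choose i * (i + j + 2).choose (i + 2) * ((i + 2) * (j + 2)) := by
    exact_mod_cast choose_succ_sq_mul i j
  have hpos₀ : (0 : ℝ) < (i + j + 2).choose i := by exact_mod_cast Nat.choose_pos (by omega)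
  have hpos₁ : (0 : ℝ) < (i + j + 2).choose (i + 1) := by exact_mod_cast Nat.choose_pos (by omega)
  have hpos₂ : (0 : ℝ) < (i + j + 2).choose (i + 2) := by exact_mod_cast Nat.choose_pos (by omega)
  rw [div_mul_div_comm, div_pow, div_le_div_iff₀ (by positivity) (by positivity)]
  refine le_of_mul_le_mul_right ?_ (by positivity : (0 : ℝ) < (i + 1) * (j + 1))
  calc _ = ((i + j + 2).choose i * (i + j + 2).choose (i + 2) : ℝ) *
        (((i + 2) * (j + 2) : ℝ) * (esymm _ i x * esymm _ (i + 2) x)) := by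
        linear_combination (esymm _ i x * esymm _ (i + 2) x) * hchoose
    _ ≤ ((i + j + 2).choose i * (i + j + 2).choose (i + 2) : ℝ) *
        (((i + 1) * (j + 1) : ℝ) * esymm _ (i + 1) x ^ 2) := by gcongr
    _ = _ := by ring

theorem AntitoneOn.sub_mul_sum_Ico_le_of_right_le {d : ℕ → ℝ} {s r k : ℕ}
    (hd : AntitoneOn d (Set.Ico s k)) (hsr : s ≤ r) (hrk : r ≤ k) :
    ((r : ℝ) - s) * ∑ i ∈ Ico s k, d i ≤ ((k : ℝ) - s) * ∑ i ∈ Ico s r, d i := by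
  have hg : Antitone fun i : ℕ => if i < r then (1 : ℝ) else 0 := fun a b hab => by
    dsimp only
    split_ifs <;> first | omega | norm_num
  have hmono := hd.monovaryOn (hg.antitoneOn _)
  rw [← coe_Ico] at hmono
  have h := hmono.sum_mul_sum_le_card_mul_sum
  simp only [mul_ite, mul_one, mul_zero, ← sum_filter, Ico_filter_lt, min_eq_right hrk,
    sum_const, nsmul_eq_mul, mul_one, Nat.card_Ico] at h
  rwa [Nat.cast_sub hsr, Nat.cast_sub (hsr.trans hrk), mul_comm] at h

theorem AntitoneOn.sub_mul_sum_Ico_le_of_left_le {d : ℕ → ℝ} {s l k : ℕ}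
    (hd : AntitoneOn d (Set.Ico s k)) (hsl : s ≤ l) (hlk : l ≤ k) :
    ((k : ℝ) - s) * ∑ i ∈ Ico l k, d i ≤ ((k : ℝ) - l) * ∑ i ∈ Ico s k, d i := by
  have hg : Monotone fun i : ℕ => if l ≤ i then (1 : ℝ) else 0 := fun a b hab => by
    dsimp only
    split_ifs <;> first | omega | norm_num
  have hanti := hd.antivaryOn (hg.monotoneOn _)
  rw [← coe_Ico] at hanti
  have h := hanti.card_mul_sum_le_sum_mul_sum
  simp only [mul_ite, mul_one, mul_zero, ← sum_filter, Ico_filter_le, max_eq_right hsl,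
    sum_const, nsmul_eq_mul, mul_one, Nat.card_Ico] at h
  rwa [Nat.cast_sub hlk, Nat.cast_sub (hsl.trans hlk), mul_comm _ ((k : ℝ) - l)] at h

theorem sub_div_sub_le_sub_div_sub_of_concave {f : ℕ → ℝ} {k l r s : ℕ}
    (hf : ∀ i, i + 2 ≤ k → f i + f (i + 2) ≤ 2 * f (i + 1))
    (hlk : l < k) (hsr : s < r) (hrk : r ≤ k) (hsl : s ≤ l) :
    (f k - f l) / ((k : ℝ) - l) ≤ (f r - f s) / ((r : ℝ) - s) := by
  set d : ℕ → ℝ := fun i => f (i + 1) - f i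
  have hd : AntitoneOn d (Set.Ico s k) := by
    refine antitoneOn_of_succ_le Set.ordConnected_Ico fun i _ _ hi => ?_
    simp only [Order.succ_eq_add_one, Set.mem_Ico, d] at hi ⊢
    linarith [hf i (by omega)]
  have h₁ := hd.sub_mul_sum_Ico_le_of_right_le hsr.le hrk
  have h₂ := hd.sub_mul_sum_Ico_le_of_left_le hsl hlk.le
  simp only [d, sum_Ico_sub f hsr.le, sum_Ico_sub f hlk.le, sum_Ico_sub f (hsl.trans hlk.le)]
    at h₁ h₂
  have hkl : (0 : ℝ) < k - l := sub_pos.2 (by exact_mod_cast hlk)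
  have hrs : (0 : ℝ) < r - s := sub_pos.2 (by exact_mod_cast hsr)
  have hks : (0 : ℝ) < k - s := sub_pos.2 (by exact_mod_cast hsr.trans_le hrk)
  rw [div_le_div_iff₀ hkl hrs]
  refine le_of_mul_le_mul_left ?_ hks
  nlinarith [mul_le_mul_of_nonneg_left h₁ hkl.le, mul_le_mul_of_nonneg_left h₂ hrs.le]

theorem div_rpow_le_div_rpow_of_mul_le_sq {p : ℕ → ℝ} {k l r s : ℕ}
    (hp : ∀ i ≤ k, 0 < p i) (hq : ∀ i, i + 2 ≤ k → p i * p (i + 2) ≤ p (i + 1) ^ 2)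
    (hlk : l < k) (hsr : s < r) (hrk : r ≤ k) (hsl : s ≤ l) :
    (p k / p l) ^ ((1 : ℝ) / ((k : ℝ) - l)) ≤ (p r / p s) ^ ((1 : ℝ) / ((r : ℝ) - s)) := by
  have hconcave : ∀ i, i + 2 ≤ k →
      Real.log (p i) + Real.log (p (i + 2)) ≤ 2 * Real.log (p (i + 1)) := fun i hi => by
    have := Real.log_le_log (mul_pos (hp i (by omega)) (hp (i + 2) hi)) (hq i hi)
    rwa [Real.log_mul (hp i (by omega)).ne' (hp (i + 2) hi).ne', Real.log_pow, Nat.cast_ofNat]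
      at this
  have hslope := sub_div_sub_le_sub_div_sub_of_concave hconcave hlk hsr hrk hsl
  rw [Real.rpow_def_of_pos (div_pos (hp k le_rfl) (hp l (by omega))),
    Real.rpow_def_of_pos (div_pos (hp r hrk) (hp s (by omega))), Real.exp_le_exp,
    Real.log_div (hp k le_rfl).ne' (hp l (by omega)).ne',
    Real.log_div (hp r hrk).ne' (hp s (by omega)).ne', mul_one_div, mul_one_div]
  exact hslope

theorem statement_10_general (n k l r s : ℕ) (hlk : l < k) (hkn : k ≤ n)
    (hsr : s < r) (hrk : r ≤ k) (hsl : s ≤ l)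
    (lam : Fin n → ℝ) (hlam : lam ∈ GammaCone n k) :
    ((esymm n k lam / (n.choose k : ℝ)) / (esymm n l lam / (n.choose l : ℝ)))
        ^ ((1 : ℝ) / ((k : ℝ) - (l : ℝ))) ≤
      ((esymm n r lam / (n.choose r : ℝ)) / (esymm n s lam / (n.choose s : ℝ)))
        ^ ((1 : ℝ) / ((r : ℝ) - (s : ℝ))) := by
  have hpos : ∀ i ≤ k, 0 < esymm n i lam / (n.choose i : ℝ) := by
    intro i hik
    have hchoose : (0 : ℝ) < n.choose i := by exact_mod_cast Nat.choose_pos (hik.trans hkn)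
    rcases Nat.eq_zero_or_pos i with rfl | hi
    · simp [esymm]
    · exact div_pos (hlam i hi hik) hchoose
  exact div_rpow_le_div_rpow_of_mul_le_sq hpos
    (fun i hi => esymm_div_choose_mul_le_sq lam (hi.trans hkn)) hlk hsr hrk hsl

/-- Generalized Newton–MacLaurin inequality: for `λ ∈ Γ_k`,
`n ≥ k > l ≥ 0`, `n ≥ r > s ≥ 0`, `k ≥ r`, `l ≥ s`,
`[(σ_k/C_n^k)/(σ_l/C_n^l)]^{1/(k−l)} ≤ [(σ_r/C_n^r)/(σ_s/C_n^s)]^{1/(r−s)}`. -/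
theorem statement_10 (n k l r s : ℕ) (hlk : l < k) (hkn : k ≤ n)
    (hsr : s < r) (hrn : r ≤ n) (hrk : r ≤ k) (hsl : s ≤ l)
    (lam : Fin n → ℝ) (hlam : lam ∈ GammaCone n k) :
    ((esymm n k lam / (n.choose k : ℝ)) / (esymm n l lam / (n.choose l : ℝ)))
        ^ ((1 : ℝ) / ((k : ℝ) - (l : ℝ))) ≤
      ((esymm n r lam / (n.choose r : ℝ)) / (esymm n s lam / (n.choose s : ℝ)))
        ^ ((1 : ℝ) / ((r : ℝ) - (s : ℝ))) :=
  statement_10_general n k l r s hlk hkn hsr hrk hsl lam hlam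
end
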